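/- Fix real numbers n and w, let k ∈ ℕ, and set x := n/2 + w − k. Let V be an ℝ-module and let P, F : V → V be ℝ-linear maps. For each j ∈ ℕ define the operator Q_{j,v} := p_{j,v}(P), the evaluation at P of the polynomial p_{j,v}(X) := ∏_{i=0}^{j−1}(X − (v−2i)(n+v−2i)) ∈ ℝ[X]. Then Σ_{j=0}^{k} C(k,j)·(x)_j·(x)_{k−j}·(Q_{k−j, w−2} ∘ F ∘ Q_{j,w}) = Σ_{i=0}^{k} Σ_{j=0}^{k−i} 4^{k−i−j}·(k!/(i!·j!))·(x)_{k−i}·(x)_{k−j}·(Q_{i,w} ∘ F ∘ Q_{j,w}) as ℝ-linear maps V → V, where C(k,j) is the binomial coefficient and (x)_m := x(x+1)⋯(x+m−1) is the ascending Pochhammer symbol. -/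

import Mathlib

/-- The polynomial `p_{j,w}(X) = ∏_{i=0}^{j-1} (X - (w-2i)(n+w-2i))` encoding the
operator `P_{2j,w} = ∏_{i=0}^{j-1} (Δ_{g₊} - (w-2i)(n+w-2i))` on the Poincaré space. -/
noncomputable def poincarePoly (n : ℝ) (j : ℕ) (w : ℝ) : Polynomial ℝ :=
  ∏ i ∈ Finset.range j,
    (Polynomial.X - Polynomial.C ((w - 2 * (i : ℝ)) * (n + w - 2 * (i : ℝ))))

/-!
The roots of `p_{j,w-2}` are those of `p_{j+1,w}` except the first, so `p_{m,w-2}` can be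
re-expanded in the Newton basis `p_{i,w}` (`i ≤ m`) of the roots `a_l = (w-2l)(n+w-2l)`.
Multiplying by the next factor gives the recurrence
`c(m+1,i+1) = c(m,i) + (a_{i+1} - a_{m+1}) c(m,i+1)`, and since
`a_i - a_j = 4(j-i)(n/2+w-i-j)` it is solved by `c(m,i) = 4^{m-i} (m!/i!) (n/2+w-m)_{m-i}`.
Substituting this into the left-hand side and exchanging the two sums, the coefficients match
by `C(k,j)(k-j)! = k!/j!` and `(x)_j (x+j)_{k-i-j} = (x)_{k-i}`.
-/

open Polynomial Finset
open scoped Nat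

section Pochhammer

variable {S : Type*} [CommSemiring S]

lemma ascPochhammer_succ_eval_left (m : ℕ) (z : S) :
    (ascPochhammer S (m + 1)).eval z = z * (ascPochhammer S m).eval (z + 1) := by
  simp [ascPochhammer_succ_left, eval_comp]

lemma ascPochhammer_add_eval (a b : ℕ) (z : S) :
    (ascPochhammer S (a + b)).eval z
      = (ascPochhammer S a).eval z * (ascPochhammer S b).eval (z + a) := by
  simp [← ascPochhammer_mul, eval_comp]

end Pochhammer

theorem prod_X_sub_C_succ_eq_sum_mul_prod {R : Type*} [CommRing R] (a : ℕ → R)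
    (c : ℕ → ℕ → R) (h_zero : c 0 0 = 1)
    (h_left : ∀ m, c (m + 1) 0 = c m 0 * (a 0 - a (m + 1)))
    (h_succ : ∀ m i, i ≤ m → c (m + 1) (i + 1) = c m i + c m (i + 1) * (a (i + 1) - a (m + 1)))
    (m : ℕ) :
    ∏ l ∈ range m, (X - C (a (l + 1)))
      = ∑ i ∈ range (m + 1), C (c m i) * ∏ l ∈ range i, (X - C (a l)) := by
  induction m with
  | zero => simp [h_zero]
  | succ m ih =>
    set N : ℕ → R[X] := fun i => ∏ l ∈ range i, (X - C (a l)) with hN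
    have hN_mul : ∀ i, N i * (X - C (a (m + 1))) = N (i + 1) + C (a i - a (m + 1)) * N i := by
      intro i
      simp only [hN, prod_range_succ, map_sub]
      ring
    calc ∏ l ∈ range (m + 1), (X - C (a (l + 1)))
        = ∑ i ∈ range (m + 1), C (c m i) * (N i * (X - C (a (m + 1)))) := by
          rw [prod_range_succ, ih, sum_mul]
          simp only [mul_assoc, hN]
      _ = ∑ i ∈ range (m + 1), C (c m i) * N (i + 1)
            + ∑ i ∈ range (m + 1), C (c m i * (a i - a (m + 1))) * N i := by
          rw [← sum_add_distrib]
          refine sum_congr rfl fun i _ => ?_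
          rw [hN_mul, map_mul]
          ring
      _ = ∑ i ∈ range (m + 2), C (c (m + 1) i) * N i := by
          have h_top : ∑ i ∈ range (m + 1), C (c m (i + 1) * (a (i + 1) - a (m + 1))) * N (i + 1)
              = ∑ i ∈ range m, C (c m (i + 1) * (a (i + 1) - a (m + 1))) * N (i + 1) := by
            simp [sum_range_succ]
          have h_shift : ∑ i ∈ range (m + 1), C (c (m + 1) (i + 1)) * N (i + 1)
              = ∑ i ∈ range (m + 1), (C (c m i) * N (i + 1)
                  + C (c m (i + 1) * (a (i + 1) - a (m + 1))) * N (i + 1)) :=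
            sum_congr rfl fun i hi => by
              rw [h_succ m i (Nat.lt_succ_iff.1 (mem_range.1 hi)), map_add, add_mul]
          rw [sum_range_succ' _ (m + 1), sum_range_succ' (fun i => C (c m i * _) * N i),
            h_shift, sum_add_distrib, h_top, h_left]
          ring


section Poincare

variable (n w : ℝ)

def poincareRoot (l : ℕ) : ℝ := (w - 2 * l) * (n + w - 2 * l)

lemma poincareRoot_sub_poincareRoot (i j : ℕ) :
    poincareRoot n w i - poincareRoot n w j = 4 * (j - i) * (n / 2 + w - i - j) := by
  unfold poincareRoot
  ring

lemma poincarePoly_sub_two (m : ℕ) :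
    poincarePoly n m (w - 2) = ∏ l ∈ range m, (X - C (poincareRoot n w (l + 1))) := by
  refine prod_congr rfl fun l _ => ?_
  rw [poincareRoot]
  push_cast
  ring_nf

/-- `c(m,i) = 4^{m-i} (m!/i!) Γ(n/2+w-i)/Γ(n/2+w-m)`, the Gamma ratio written as a Pochhammer
symbol. -/
noncomputable def shiftCoeff (m i : ℕ) : ℝ :=
  4 ^ (m - i) * ((m ! : ℝ) / i !) * (ascPochhammer ℝ (m - i)).eval (n / 2 + w - m)

lemma shiftCoeff_succ_zero (m : ℕ) :
    shiftCoeff n w (m + 1) 0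
      = shiftCoeff n w m 0 * (poincareRoot n w 0 - poincareRoot n w (m + 1)) := by
  have hz : n / 2 + w - (m : ℝ) = n / 2 + w - (m + 1 : ℕ) + 1 := by push_cast; ring
  simp only [shiftCoeff, Nat.sub_zero, hz, ascPochhammer_succ_eval_left,
    poincareRoot_sub_poincareRoot, Nat.factorial_succ]
  push_cast
  ring

lemma shiftCoeff_succ_succ {m i : ℕ} (hi : i ≤ m) :
    shiftCoeff n w (m + 1) (i + 1)
      = shiftCoeff n w m i
        + shiftCoeff n w m (i + 1) * (poincareRoot n w (i + 1) - poincareRoot n w (m + 1)) := by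
  obtain ⟨d, rfl⟩ := Nat.exists_eq_add_of_le hi
  rcases d with _ | e
  · simp [shiftCoeff, div_self, Nat.factorial_ne_zero]
  · have h₁ : i + (e + 1) + 1 - (i + 1) = e + 1 := by omega
    have h₂ : i + (e + 1) - i = e + 1 := by omega
    have h₃ : i + (e + 1) - (i + 1) = e := by omega
    have hz : n / 2 + w - ((i + (e + 1) : ℕ) : ℝ) = n / 2 + w - (i + (e + 1) + 1 : ℕ) + 1 := by
      push_cast; ring
    simp only [shiftCoeff, h₁, h₂, h₃, hz, poincareRoot_sub_poincareRoot, Nat.factorial_succ]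
    set z : ℝ := n / 2 + w - (i + (e + 1) + 1 : ℕ) with hz_def
    rw [ascPochhammer_succ_eval_left e z, ascPochhammer_succ_eval e (z + 1)]
    push_cast at hz_def ⊢
    rw [hz_def]
    field_simp
    ring

theorem poincarePoly_sub_two_eq_sum (m : ℕ) :
    poincarePoly n m (w - 2)
      = ∑ i ∈ range (m + 1), C (shiftCoeff n w m i) * poincarePoly n i w :=
  (poincarePoly_sub_two n w m).trans <|
    prod_X_sub_C_succ_eq_sum_mul_prod (poincareRoot n w) (shiftCoeff n w)
      (by simp [shiftCoeff]) (shiftCoeff_succ_zero n w) (fun _ _ => shiftCoeff_succ_succ n w) m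

lemma choose_mul_ascPochhammer_mul_shiftCoeff {i j k : ℕ} (hijk : i + j ≤ k) :
    (k.choose j : ℝ) * (ascPochhammer ℝ j).eval (n / 2 + w - k) * shiftCoeff n w (k - j) i
      = 4 ^ (k - i - j) * ((k ! : ℝ) / (i ! * j !))
          * (ascPochhammer ℝ (k - i)).eval (n / 2 + w - k) := by
  obtain ⟨l, rfl⟩ : ∃ l, k = i + l + j := ⟨k - i - j, by omega⟩
  have h₁ : i + l + j - j = i + l := by omega
  have h₂ : i + l - i = l := by omega
  have h₃ : i + l + j - i - j = l := by omega
  have h₄ : i + l + j - i = j + l := by omega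
  have hx : n / 2 + w - ((i + l : ℕ) : ℝ) = n / 2 + w - ((i + l + j : ℕ) : ℝ) + j := by
    push_cast; ring
  have h_choose : ((i + l + j).choose j : ℝ) * (i + l)! * j ! = (i + l + j)! := by
    exact_mod_cast Nat.add_choose_mul_factorial_mul_factorial (i + l) j
  rw [shiftCoeff, h₁, h₂, h₃, h₄, hx, ascPochhammer_add_eval, ← h_choose]
  field_simp

/-- The algebraic content of Lemma 3.1:
`Σ_j C(k,j)(x)_j(x)_{k-j} P_{2k-2j,w-2}∘F∘P_{2j,w}
  = Σ_{i,j} 4^{k-i-j}(k!/(i!j!))(x)_{k-i}(x)_{k-j} P_{2i,w}∘F∘P_{2j,w}`,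
with `x = n/2 + w - k` and Gamma ratios written as ascending Pochhammer symbols. -/
theorem expand_Df {V : Type*} [AddCommGroup V] [Module ℝ V]
    (n w : ℝ) (k : ℕ) (x : ℝ) (hx : x = n / 2 + w - (k : ℝ))
    (P F : Module.End ℝ V)
    (Q : ℕ → ℝ → Module.End ℝ V)
    (hQ : ∀ j v, Q j v = Polynomial.aeval P (poincarePoly n j v)) :
    ∑ j ∈ Finset.range (k + 1),
        ((Nat.choose k j : ℝ) * (ascPochhammer ℝ j).eval x
            * (ascPochhammer ℝ (k - j)).eval x)
          • (Q (k - j) (w - 2) * F * Q j w)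
      = ∑ i ∈ Finset.range (k + 1), ∑ j ∈ Finset.range (k + 1 - i),
          ((4 : ℝ) ^ (k - i - j) * ((k.factorial : ℝ) / ((i.factorial : ℝ) * (j.factorial : ℝ)))
              * (ascPochhammer ℝ (k - i)).eval x * (ascPochhammer ℝ (k - j)).eval x)
            • (Q i w * F * Q j w) := by
  have hQ_sub_two : ∀ m, Q m (w - 2) = ∑ i ∈ range (m + 1), shiftCoeff n w m i • Q i w := by
    intro m
    simp only [hQ, poincarePoly_sub_two_eq_sum, map_sum, map_mul, aeval_C, Algebra.smul_def]
  calc _ = ∑ j ∈ range (k + 1), ∑ i ∈ range (k - j + 1),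
          ((k.choose j : ℝ) * (ascPochhammer ℝ j).eval x * (ascPochhammer ℝ (k - j)).eval x
            * shiftCoeff n w (k - j) i) • (Q i w * F * Q j w) := by
        simp only [hQ_sub_two, sum_mul, smul_sum, smul_mul_assoc, smul_smul]
    _ = ∑ i ∈ range (k + 1), ∑ j ∈ range (k + 1 - i),
          ((k.choose j : ℝ) * (ascPochhammer ℝ j).eval x * (ascPochhammer ℝ (k - j)).eval x
            * shiftCoeff n w (k - j) i) • (Q i w * F * Q j w) :=
        sum_comm' fun j i => by simp only [mem_range]; omega
    _ = _ := by
        refine sum_congr rfl fun i _ => sum_congr rfl fun j hj => ?_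
        have hijk : i + j ≤ k := by
          have := mem_range.1 hj
          omega
        rw [hx, ← choose_mul_ascPochhammer_mul_shiftCoeff n w hijk]
        congr 1
        ring
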